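/- Let A = K[[f_1,…,f_s]] ⊆ F = K[[x_1,…,x_n]] with the length of F/A as an A-module finite. If a, b ∈ (ℝ_{>0})^n satisfy exp(A,a) = exp(A,b), then for every θ ∈ [0,1] one has exp(A, θa + (1−θ)b) = exp(A,a). In particular, for every subset S of ℕ^n the set E_S = {a ∈ (ℝ_{>0})^n : exp(A,a) = S} is convex. -/

import Mathlib

noncomputable section

namespace CanonicalFan

open MvPowerSeries

variable (K : Type*) [Field K] (n : ℕ)

/-- The weight `⟨a, α⟩ = ∑ i, a i * α i` of an exponent `α` with respect to `a`. -/
def weight (a : Fin n → ℝ) (α : Fin n →₀ ℕ) : ℝ := ∑ i, a i * (α i : ℝ)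

/-- The support of a formal power series. -/
def supp (f : MvPowerSeries (Fin n) K) : Set (Fin n →₀ ℕ) :=
  {α | MvPowerSeries.coeff α f ≠ 0}

/-- The `a`-valuation `ν(f,a)`, with the convention `ν(0,a) = +∞`. -/
def nu (a : Fin n → ℝ) (f : MvPowerSeries (Fin n) K) : EReal :=
  sInf ((fun α => ((weight n a α : ℝ) : EReal)) '' supp K n f)

open Classical in
/-- The `a`-initial form `in(f,a)` of a power series. -/
def initialForm (a : Fin n → ℝ) (f : MvPowerSeries (Fin n) K) :
    MvPowerSeries (Fin n) K :=
  fun α => if ((weight n a α : ℝ) : EReal) = nu K n a f then MvPowerSeries.coeff α f else 0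

open Classical in
/-- `exp(f,a)`: the `≺`-maximal element of the support of `in(f,a)`, where `≺` is the
well-ordering `r` (junk value `0` if no maximal element exists). -/
def exponent (r : (Fin n →₀ ℕ) → (Fin n →₀ ℕ) → Prop) (a : Fin n → ℝ)
    (f : MvPowerSeries (Fin n) K) : Fin n →₀ ℕ :=
  if h : ∃ β ∈ supp K n (initialForm K n a f),
      ∀ γ ∈ supp K n (initialForm K n a f), γ = β ∨ r γ β
  then h.choose else 0

/-- The `a`-leading monomial `M(f,a) = c_{exp(f,a)} x^{exp(f,a)}`. -/
def leadMon (r : (Fin n →₀ ℕ) → (Fin n →₀ ℕ) → Prop) (a : Fin n → ℝ)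
    (f : MvPowerSeries (Fin n) K) : MvPowerSeries (Fin n) K :=
  MvPowerSeries.monomial (exponent K n r a f)
    (MvPowerSeries.coeff (exponent K n r a f) f)

/-- The maximal ideal `(x_1, …, x_n)` of `K[[x_1,…,x_n]]`. -/
def mIdeal : Ideal (MvPowerSeries (Fin n) K) :=
  Ideal.span (Set.range (MvPowerSeries.X : Fin n → MvPowerSeries (Fin n) K))

/-- `K[[S]]`: the smallest `K`-subalgebra of `K[[x_1,…,x_n]]` containing `S` and closed in
the `(x_1,…,x_n)`-adic topology; concretely, the adic closure of `Algebra.adjoin K S`. -/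
def closedAdjoin (S : Set (MvPowerSeries (Fin n) K)) :
    Subalgebra K (MvPowerSeries (Fin n) K) where
  carrier := {f | ∀ N : ℕ, ∃ g ∈ Algebra.adjoin K S, f - g ∈ (mIdeal K n) ^ N}
  algebraMap_mem' c N :=
    ⟨algebraMap K _ c, Subalgebra.algebraMap_mem _ c, by simp [Ideal.zero_mem]⟩
  add_mem' {f g} hf hg N := by
    obtain ⟨p, hp, hfp⟩ := hf N
    obtain ⟨q, hq, hgq⟩ := hg N
    exact ⟨p + q, add_mem hp hq, by simpa [add_sub_add_comm] using Ideal.add_mem _ hfp hgq⟩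
  mul_mem' {f g} hf hg N := by
    obtain ⟨p, hp, hfp⟩ := hf N
    obtain ⟨q, hq, hgq⟩ := hg N
    refine ⟨p * q, mul_mem hp hq, ?_⟩
    have h : f * g - p * q = f * (g - q) + (f - p) * q := by ring
    rw [h]
    exact Ideal.add_mem _ (Ideal.mul_mem_left _ _ hgq) (Ideal.mul_mem_right _ _ hfp)

/-- `exp(A,a) = {exp(f,a) : f ∈ A, f ≠ 0}`. -/
def expSet (r : (Fin n →₀ ℕ) → (Fin n →₀ ℕ) → Prop) (a : Fin n → ℝ)
    (A : Set (MvPowerSeries (Fin n) K)) : Set (Fin n →₀ ℕ) :=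
  {β | ∃ f ∈ A, f ≠ 0 ∧ exponent K n r a f = β}

/-- `in(A,a) = K[[in(f,a) : f ∈ A ∖ {0}]]`. -/
def inAlgebra (a : Fin n → ℝ) (A : Set (MvPowerSeries (Fin n) K)) :
    Subalgebra K (MvPowerSeries (Fin n) K) :=
  closedAdjoin K n {g | ∃ f ∈ A, f ≠ 0 ∧ initialForm K n a f = g}

/-- `M(A,a) = K[[M(f,a) : f ∈ A ∖ {0}]]`. -/
def leadAlgebra (r : (Fin n →₀ ℕ) → (Fin n →₀ ℕ) → Prop) (a : Fin n → ℝ)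
    (A : Set (MvPowerSeries (Fin n) K)) : Subalgebra K (MvPowerSeries (Fin n) K) :=
  closedAdjoin K n {g | ∃ f ∈ A, f ≠ 0 ∧ leadMon K n r a f = g}

set_option synthInstance.maxHeartbeats 1000000 in
/-- The length of `F/A` as an `A`-module is finite. -/
def FiniteColength (A : Subalgebra K (MvPowerSeries (Fin n) K)) : Prop :=
  IsFiniteLength A
    (MvPowerSeries (Fin n) K ⧸ LinearMap.range (Algebra.linearMap A (MvPowerSeries (Fin n) K)))

/-- `{g_1,…,g_r}` is an `a`-canonical basis of `A`. -/
def IsCanonicalBasis (r : (Fin n →₀ ℕ) → (Fin n →₀ ℕ) → Prop) (a : Fin n → ℝ)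
    (A : Subalgebra K (MvPowerSeries (Fin n) K)) {m : ℕ}
    (g : Fin m → MvPowerSeries (Fin n) K) : Prop :=
  (∀ i, g i ∈ A ∧ g i ≠ 0) ∧
    leadAlgebra K n r a (A : Set (MvPowerSeries (Fin n) K)) =
      closedAdjoin K n (Set.range fun i => leadMon K n r a (g i))

/-- `{g_1,…,g_r}` is a minimal `a`-canonical basis of `A`. -/
def IsMinimalCanonicalBasis (r : (Fin n →₀ ℕ) → (Fin n →₀ ℕ) → Prop) (a : Fin n → ℝ)
    (A : Subalgebra K (MvPowerSeries (Fin n) K)) {m : ℕ}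
    (g : Fin m → MvPowerSeries (Fin n) K) : Prop :=
  IsCanonicalBasis K n r a A g ∧
    ∀ T : Set (MvPowerSeries (Fin n) K),
      T ⊂ Set.range (fun i => leadMon K n r a (g i)) →
        closedAdjoin K n T ≠ leadAlgebra K n r a (A : Set (MvPowerSeries (Fin n) K))

/-- `{g_1,…,g_r}` is the `a`-reduced canonical basis of `A`. -/
def IsReducedCanonicalBasis (r : (Fin n →₀ ℕ) → (Fin n →₀ ℕ) → Prop) (a : Fin n → ℝ)
    (A : Subalgebra K (MvPowerSeries (Fin n) K)) {m : ℕ}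
    (g : Fin m → MvPowerSeries (Fin n) K) : Prop :=
  IsMinimalCanonicalBasis K n r a A g ∧
    (∀ i, MvPowerSeries.coeff (exponent K n r a (g i)) (g i) = 1) ∧
    ∀ i, ∀ α ∈ supp K n (g i - leadMon K n r a (g i)),
      (MvPowerSeries.monomial α (1 : K)) ∉
        closedAdjoin K n (Set.range fun j => leadMon K n r a (g j))

/-- A power series is a (nonzero) monomial. -/
def IsMonomial (g : MvPowerSeries (Fin n) K) : Prop :=
  ∃ (α : Fin n →₀ ℕ) (c : K), c ≠ 0 ∧ g = MvPowerSeries.monomial α c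

/-!
For a positive weight `w`, `exp(f, w)` is the least element of `supp f` for the order comparing
`w`-weights first and `≺` (reversed) second. Because `A` is closed in the adic topology, every
`β ∈ exp(A, w)` is the exponent of some `f ∈ A` whose other exponents all lie outside
`exp(A, w)`: reduce the offending exponents one at a time, in increasing order; their weights
tend to infinity, so the reductions converge.

If `exp(A, b) ⊆ exp(A, a)`, such a reduced `f` for `a` has `exp(f, b) = exp(f, a) = β`, so every
other exponent of `f` is larger than `β` for both `a` and `b`, hence for every convex combination
`c` of them, and `exp(A, a) ⊆ exp(A, c)`. Finally, the reduced elements also show that an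
inclusion `exp(A, v) ⊆ exp(A, w)` between exponent sets of positive weights is an equality.
-/

section Order

variable {n} {w : Fin n → ℝ} {r : (Fin n →₀ ℕ) → (Fin n →₀ ℕ) → Prop}

lemma weight_convexComb (a b : Fin n → ℝ) (θ : ℝ) (α : Fin n →₀ ℕ) :
    weight n (θ • a + (1 - θ) • b) α = θ * weight n a α + (1 - θ) * weight n b α := by
  simp only [weight, Pi.add_apply, Pi.smul_apply, smul_eq_mul, Finset.mul_sum,
    ← Finset.sum_add_distrib]
  exact Finset.sum_congr rfl fun i _ => by ring

lemma finite_setOf_weight_le (hw : ∀ i, 0 < w i) (W : ℝ) :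
    {α : Fin n →₀ ℕ | weight n w α ≤ W}.Finite := by
  refine (Set.finite_Iic (Finsupp.equivFunOnFinite.symm fun i => ⌈W / w i⌉₊)).subset
    fun α hα i => ?_
  have hi : w i * α i ≤ W :=
    (Finset.single_le_sum (fun j _ => mul_nonneg (hw j).le (Nat.cast_nonneg (α j)))
      (Finset.mem_univ i)).trans hα
  rw [Finsupp.equivFunOnFinite_symm_apply_apply, ← Nat.cast_le (α := ℝ)]
  exact ((le_div_iff₀' (hw i)).mpr hi).trans (Nat.le_ceil _)

variable (n w r) in
/-- `exp(f, w)` is the least element of `supp f` for this order. -/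
def WLt (β γ : Fin n →₀ ℕ) : Prop :=
  weight n w β < weight n w γ ∨ weight n w β = weight n w γ ∧ r γ β

lemma WLt.weight_le {β γ : Fin n →₀ ℕ} (h : WLt n w r β γ) : weight n w β ≤ weight n w γ :=
  h.elim le_of_lt fun h => h.1.le

instance [IsStrictTotalOrder (Fin n →₀ ℕ) r] : IsStrictTotalOrder (Fin n →₀ ℕ) (WLt n w r) where
  irrefl β h := h.elim (lt_irrefl _) fun h => irrefl_of r β h.2
  trans β γ δ h₁ h₂ := by
    rcases h₁ with h₁ | h₁ <;> rcases h₂ with h₂ | h₂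
    · exact Or.inl (h₁.trans h₂)
    · exact Or.inl (h₂.1 ▸ h₁)
    · exact Or.inl (h₁.1 ▸ h₂)
    · exact Or.inr ⟨h₁.1.trans h₂.1, trans_of r h₂.2 h₁.2⟩
  trichotomous β γ hβγ hγβ := by
    have hwt : weight n w β = weight n w γ :=
      le_antisymm (not_lt.1 fun h => hγβ (Or.inl h)) (not_lt.1 fun h => hβγ (Or.inl h))
    exact Std.Trichotomous.trichotomous β γ (fun h => hγβ (Or.inr ⟨hwt.symm, h⟩))
      (fun h => hβγ (Or.inr ⟨hwt, h⟩))

lemma exists_least_of_finite {α : Type*} {lt : α → α → Prop} [IsStrictTotalOrder α lt]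
    {s : Set α} (hs : s.Finite) (hne : s.Nonempty) : ∃ a ∈ s, ∀ x ∈ s, x ≠ a → lt a x := by
  let := partialOrderOfSO lt
  obtain ⟨a, ha⟩ := hs.exists_minimal hne
  refine ⟨a, ha.1, fun x hx hxa => ?_⟩
  rcases trichotomous_of lt a x with h | rfl | h
  · exact h
  · exact absurd rfl hxa
  · exact absurd (ha.2 hx (Or.inr h)) (fun h' => h'.elim (fun e => hxa e.symm) (asymm h))

variable (n w r) in
def IsWLeast (s : Set (Fin n →₀ ℕ)) (β : Fin n →₀ ℕ) : Prop :=
  β ∈ s ∧ ∀ γ ∈ s, γ ≠ β → WLt n w r β γ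

variable [IsStrictTotalOrder (Fin n →₀ ℕ) r]

lemma exists_isWLeast (hw : ∀ i, 0 < w i) {s : Set (Fin n →₀ ℕ)} (hne : s.Nonempty) :
    ∃ β, IsWLeast n w r s β := by
  obtain ⟨γ₀, hγ₀⟩ := hne
  obtain ⟨β, hβ, hmin⟩ := exists_least_of_finite (lt := WLt n w r)
    ((finite_setOf_weight_le hw (weight n w γ₀)).inter_of_right s)
    ⟨γ₀, hγ₀, le_refl (weight n w γ₀)⟩
  refine ⟨β, hβ.1, fun γ hγ hγβ => ?_⟩
  by_cases hγw : weight n w γ ≤ weight n w γ₀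
  · exact hmin γ ⟨hγ, hγw⟩ hγβ
  · exact Or.inl (hβ.2.trans_lt (not_le.1 hγw))

end Order

section Exponent

variable {K n} {w : Fin n → ℝ} {r : (Fin n →₀ ℕ) → (Fin n →₀ ℕ) → Prop}
  {f : MvPowerSeries (Fin n) K}

lemma mem_supp {α : Fin n →₀ ℕ} : α ∈ supp K n f ↔ MvPowerSeries.coeff α f ≠ 0 := Iff.rfl

lemma coeff_initialForm (α : Fin n →₀ ℕ) :
    MvPowerSeries.coeff α (initialForm K n w f) =
      if (weight n w α : EReal) = nu K n w f then MvPowerSeries.coeff α f else 0 := rfl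

lemma supp_initialForm {m : Fin n →₀ ℕ} (hm : m ∈ supp K n f)
    (hmin : ∀ γ ∈ supp K n f, weight n w m ≤ weight n w γ) (γ : Fin n →₀ ℕ) :
    γ ∈ supp K n (initialForm K n w f) ↔ γ ∈ supp K n f ∧ weight n w γ = weight n w m := by
  have hnu : nu K n w f = (weight n w m : EReal) :=
    IsLeast.csInf_eq ⟨⟨m, hm, rfl⟩, by
      rintro _ ⟨γ, hγ, rfl⟩
      exact EReal.coe_le_coe_iff.2 (hmin γ hγ)⟩
  by_cases h : weight n w γ = weight n w m <;> simp [supp, coeff_initialForm, hnu, h]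

variable [IsStrictTotalOrder (Fin n →₀ ℕ) r]

lemma exponent_eq_of_isWLeast {β : Fin n →₀ ℕ} (hβ : IsWLeast n w r (supp K n f) β) :
    exponent K n r w f = β := by
  have hsupp := supp_initialForm hβ.1 fun γ hγ =>
    if h : γ = β then h ▸ le_rfl else (hβ.2 γ hγ h).weight_le
  have hβmax : ∀ γ ∈ supp K n (initialForm K n w f), γ = β ∨ r γ β := by
    intro γ hγ
    obtain ⟨hγf, hγw⟩ := (hsupp γ).1 hγ
    refine or_iff_not_imp_left.2 fun hγβ => ?_
    exact (hβ.2 γ hγf hγβ).resolve_left hγw.symm.not_lt |>.2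
  have hex : ∃ β ∈ supp K n (initialForm K n w f),
      ∀ γ ∈ supp K n (initialForm K n w f), γ = β ∨ r γ β :=
    ⟨β, (hsupp β).2 ⟨hβ.1, rfl⟩, hβmax⟩
  rw [exponent, dif_pos hex]
  obtain ⟨hmem, hmax⟩ := hex.choose_spec
  rcases hβmax _ hmem with h | h
  · exact h
  · exact (hmax β ((hsupp β).2 ⟨hβ.1, rfl⟩)).elim Eq.symm fun h' => absurd h (asymm h')

lemma isWLeast_exponent (hw : ∀ i, 0 < w i) (hf : f ≠ 0) :
    IsWLeast n w r (supp K n f) (exponent K n r w f) := by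
  obtain ⟨β, hβ⟩ :=
    exists_isWLeast (r := r) hw ((MvPowerSeries.ne_zero_iff_exists_coeff_ne_zero f).1 hf)
  rwa [exponent_eq_of_isWLeast hβ]

end Exponent

section Adic

variable {K n}

lemma monomial_one_mem_mIdeal_pow (d : Fin n →₀ ℕ) :
    MvPowerSeries.monomial d (1 : K) ∈ mIdeal K n ^ d.degree := by
  induction d using Finsupp.induction with
  | zero => simp
  | single_add i k d _ _ ih =>
    rw [← mul_one (1 : K), ← MvPowerSeries.monomial_mul_monomial, ← MvPowerSeries.X_pow_eq,
      map_add, Finsupp.degree_single, pow_add]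
    exact Ideal.mul_mem_mul (Ideal.pow_mem_pow (Ideal.subset_span (Set.mem_range_self i)) k) ih

open Classical in
/-- Write `f = ∑_{deg d = N} x^d g_d`, each monomial `x^δ` of `f` going to the summand of a
chosen `d = c δ ≤ δ`. -/
lemma mem_mIdeal_pow_of_coeff_eq_zero {N : ℕ} {f : MvPowerSeries (Fin n) K}
    (hf : ∀ δ : Fin n →₀ ℕ, δ.degree < N → MvPowerSeries.coeff δ f = 0) :
    f ∈ mIdeal K n ^ N := by
  let c : (Fin n →₀ ℕ) → (Fin n →₀ ℕ) := fun δ =>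
    if h : N ≤ δ.degree then (Finsupp.exists_le_degree_eq δ N h).choose else 0
  let g : (Fin n →₀ ℕ) → MvPowerSeries (Fin n) K := fun d e =>
    if c (e + d) = d then MvPowerSeries.coeff (e + d) f else 0
  have hD := Finsupp.finite_of_degree_eq (σ := Fin n) N
  suffices f = ∑ d ∈ hD.toFinset, MvPowerSeries.monomial d 1 * g d by
    rw [this]
    refine Ideal.sum_mem _ fun d hd => Ideal.mul_mem_right _ _ ?_
    have hdN : d.degree = N := hD.mem_toFinset.1 hd
    exact hdN ▸ monomial_one_mem_mIdeal_pow d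
  ext δ
  have hterm : ∀ d, (if d ≤ δ then MvPowerSeries.coeff (δ - d) (g d) else 0) =
      if d = c δ ∧ d ≤ δ then MvPowerSeries.coeff δ f else 0 := by
    intro d
    by_cases hd : d ≤ δ
    · change (if d ≤ δ then (if c (δ - d + d) = d then MvPowerSeries.coeff (δ - d + d) f else 0)
        else 0) = _
      simp only [tsub_add_cancel_of_le hd, hd, and_true, if_true, eq_comm]
    · simp [hd]
  simp only [map_sum, MvPowerSeries.coeff_monomial_mul, one_mul, hterm]
  by_cases hδ : N ≤ δ.degree
  · obtain ⟨hcδ, hcN⟩ : c δ ≤ δ ∧ (c δ).degree = N := by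
      simpa only [c, dif_pos hδ] using (Finsupp.exists_le_degree_eq δ N hδ).choose_spec
    rw [Finset.sum_eq_single_of_mem (c δ) (hD.mem_toFinset.2 hcN) fun d _ hd => if_neg
      fun h => hd h.1, if_pos ⟨rfl, hcδ⟩]
  · simp [hf δ (not_le.1 hδ)]

open Filter in
lemma mem_closedAdjoin_of_eventually_coeff_eq {T : Set (MvPowerSeries (Fin n) K)}
    {F : ℕ → MvPowerSeries (Fin n) K} {f : MvPowerSeries (Fin n) K}
    (hF : ∀ k, F k ∈ closedAdjoin K n T)
    (hlim : ∀ δ, ∀ᶠ k in atTop, MvPowerSeries.coeff δ (F k) = MvPowerSeries.coeff δ f) :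
    f ∈ closedAdjoin K n T := by
  intro N
  obtain ⟨k, hk⟩ := ((Finsupp.finite_of_degree_lt N).eventually_all.2 fun δ _ => hlim δ).exists
  obtain ⟨p, hp, hFp⟩ := hF k N
  have hfF : f - F k ∈ mIdeal K n ^ N :=
    mem_mIdeal_pow_of_coeff_eq_zero fun δ hδ => by rw [map_sub, hk δ hδ, sub_self]
  exact ⟨p, hp, by simpa using Ideal.add_mem _ hfF hFp⟩

end Adic

section Reduction

variable {K n} {w : Fin n → ℝ} {r : (Fin n →₀ ℕ) → (Fin n →₀ ℕ) → Prop}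
  [IsStrictTotalOrder (Fin n →₀ ℕ) r]

open Filter

lemma tendsto_weight_of_wlt_succ (hw : ∀ i, 0 < w i) {u : ℕ → Fin n →₀ ℕ}
    (hu : ∀ k, WLt n w r (u k) (u (k + 1))) :
    Tendsto (fun k => weight n w (u k)) atTop atTop := by
  refine tendsto_atTop_atTop_of_monotone (monotone_nat_of_le_succ fun k => (hu k).weight_le)
    fun W => ?_
  by_contra! hW
  have hinj : u.Injective := fun k l hkl => by
    by_contra hne
    rcases Nat.lt_or_gt_of_ne hne with h | h <;>
      exact irrefl_of (WLt n w r) _ (hkl ▸ Nat.rel_of_forall_rel_succ_of_lt _ hu h)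
  exact Set.infinite_range_of_injective hinj
    ((finite_setOf_weight_le hw W).subset (Set.range_subset_iff.2 fun k => (hW k).le))

lemma exists_eventually_coeff_eq {F : ℕ → MvPowerSeries (Fin n) K} {τ : ℕ → ℝ}
    (hτ : Tendsto τ atTop atTop)
    (hF : ∀ k δ, weight n w δ < τ k →
      MvPowerSeries.coeff δ (F (k + 1)) = MvPowerSeries.coeff δ (F k)) :
    ∃ f : MvPowerSeries (Fin n) K,
      ∀ δ, ∀ᶠ k in atTop, MvPowerSeries.coeff δ (F k) = MvPowerSeries.coeff δ f := by
  have hconst : ∀ δ, EventuallyConst (fun k => MvPowerSeries.coeff δ (F k)) atTop := by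
    refine fun δ => eventuallyConst_atTop_nat.2 ?_
    obtain ⟨k₀, hk₀⟩ := (hτ.eventually_gt_atTop (weight n w δ)).exists_forall_of_atTop
    exact ⟨k₀, fun k hk => hF k δ (hk₀ k hk)⟩
  choose c hc using fun δ => (hconst δ).eventuallyEq_const
  exact ⟨c, hc⟩

lemma supp_sub_smul_subset (f g : MvPowerSeries (Fin n) K) (c : K) :
    supp K n (f - c • g) ⊆ supp K n f ∪ supp K n g := by
  intro γ hγ
  by_contra h
  rw [Set.mem_union, not_or] at h
  exact hγ (by simp [not_not.1 h.1, not_not.1 h.2])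

lemma exists_monic_of_mem_expSet (hw : ∀ i, 0 < w i)
    {A : Subalgebra K (MvPowerSeries (Fin n) K)}
    {β : Fin n →₀ ℕ} (hβ : β ∈ expSet K n r w A) :
    ∃ g ∈ A, MvPowerSeries.coeff β g = 1 ∧ IsWLeast n w r (supp K n g) β := by
  obtain ⟨f, hfA, hf0, rfl⟩ := hβ
  have hf := isWLeast_exponent (r := r) hw hf0
  have hc : MvPowerSeries.coeff (exponent K n r w f) f ≠ 0 := hf.1
  have hsupp : supp K n ((MvPowerSeries.coeff (exponent K n r w f) f)⁻¹ • f) = supp K n f := by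
    ext γ
    simp [supp, hc]
  exact ⟨_, A.smul_mem hfA _, by simp [hc], hsupp ▸ hf⟩

lemma exists_reduction_step (hw : ∀ i, 0 < w i) {A : Subalgebra K (MvPowerSeries (Fin n) K)}
    {β : Fin n →₀ ℕ} {g : MvPowerSeries (Fin n) K} (hgA : g ∈ A)
    (hg1 : MvPowerSeries.coeff β g = 1) (hgβ : IsWLeast n w r (supp K n g) β)
    (hbad : ((supp K n g ∩ expSet K n r w A) \ {β}).Nonempty) :
    ∃ α, IsWLeast n w r ((supp K n g ∩ expSet K n r w A) \ {β}) α ∧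
      ∃ g' ∈ A, MvPowerSeries.coeff β g' = 1 ∧ IsWLeast n w r (supp K n g') β ∧
        (∀ δ, weight n w δ < weight n w α →
          MvPowerSeries.coeff δ g' = MvPowerSeries.coeff δ g) ∧
        ∀ γ ∈ (supp K n g' ∩ expSet K n r w A) \ {β}, WLt n w r α γ := by
  obtain ⟨α, hα⟩ := exists_isWLeast (r := r) hw hbad
  refine ⟨α, hα, ?_⟩
  obtain ⟨⟨⟨hαg, hαA⟩, hαβ⟩, hαmin⟩ := hα
  obtain ⟨h, hhA, hh1, hhα⟩ := exists_monic_of_mem_expSet hw hαA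
  have hβα : WLt n w r β α := hgβ.2 α hαg hαβ
  have hhβ : MvPowerSeries.coeff β h = 0 :=
    not_not.1 fun hne => asymm hβα (hhα.2 β hne (Ne.symm hαβ))
  have hhlow : ∀ δ, weight n w δ < weight n w α → MvPowerSeries.coeff δ h = 0 := by
    refine fun δ hδ => not_not.1 fun hne => hδ.not_ge ?_
    by_cases hδα : δ = α
    · exact hδα ▸ le_rfl
    · exact (hhα.2 δ hne hδα).weight_le
  set g' := g - MvPowerSeries.coeff α g • h
  have hg'1 : MvPowerSeries.coeff β g' = 1 := by simp [g', hhβ, hg1]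
  have hg'α : MvPowerSeries.coeff α g' = 0 := by simp [g', hh1]
  refine ⟨g', A.sub_mem hgA (A.smul_mem hhA _), hg'1, ⟨by simp [supp, hg'1], ?_⟩,
    fun δ hδ => by simp [g', hhlow δ hδ], ?_⟩
  · intro γ hγ hγβ
    rcases supp_sub_smul_subset _ _ _ hγ with hγg | hγh
    · exact hgβ.2 γ hγg hγβ
    · by_cases hγα : γ = α
      · exact hγα ▸ hβα
      · exact _root_.trans hβα (hhα.2 γ hγh hγα)
  · rintro γ ⟨⟨hγ, hγA⟩, hγβ⟩
    have hγα : γ ≠ α := by rintro rfl; exact hγ hg'α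
    rcases supp_sub_smul_subset _ _ _ hγ with hγg | hγh
    · exact hαmin γ ⟨⟨hγg, hγA⟩, hγβ⟩ hγα
    · exact hhα.2 γ hγh hγα

theorem exists_reduced_of_mem_expSet (hw : ∀ i, 0 < w i) {T : Set (MvPowerSeries (Fin n) K)}
    {β : Fin n →₀ ℕ} (hβ : β ∈ expSet K n r w (closedAdjoin K n T)) :
    ∃ f ∈ closedAdjoin K n T, MvPowerSeries.coeff β f = 1 ∧ IsWLeast n w r (supp K n f) β ∧
      ∀ γ ∈ supp K n f, γ ∈ expSet K n r w (closedAdjoin K n T) → γ = β := by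
  set A := closedAdjoin K n T
  -- Otherwise the reduction never stops, and the limit of the reduction sequence is reduced.
  by_contra! hbad
  let P g := g ∈ A ∧ MvPowerSeries.coeff β g = 1 ∧ IsWLeast n w r (supp K n g) β
  have hstep : ∀ g : {g // P g}, ∃ (g' : {g // P g}) (α : Fin n →₀ ℕ),
      IsWLeast n w r ((supp K n g ∩ expSet K n r w A) \ {β}) α ∧
      (∀ δ, weight n w δ < weight n w α →
        MvPowerSeries.coeff δ g'.1 = MvPowerSeries.coeff δ g.1) ∧
      ∀ γ ∈ (supp K n g' ∩ expSet K n r w A) \ {β}, WLt n w r α γ := by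
    rintro ⟨g, hgA, hg1, hgβ⟩
    obtain ⟨γ, hγ, hγA, hγβ⟩ := hbad g hgA hg1 hgβ
    obtain ⟨α, hα, g', hg'A, hg'1, hg'β, hagree, habove⟩ :=
      exists_reduction_step hw hgA hg1 hgβ ⟨γ, ⟨hγ, hγA⟩, hγβ⟩
    exact ⟨⟨g', hg'A, hg'1, hg'β⟩, α, hα, hagree, habove⟩
  choose next α hα hagree habove using hstep
  obtain ⟨g₀, hg₀⟩ := exists_monic_of_mem_expSet hw hβ
  let F : ℕ → {g // P g} := fun k => next^[k] ⟨g₀, hg₀⟩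
  have hFsucc : ∀ k, F (k + 1) = next (F k) := fun k => Function.iterate_succ_apply' _ _ _
  have hα_tendsto : Tendsto (fun k => weight n w (α (F k))) atTop atTop :=
    tendsto_weight_of_wlt_succ hw fun k => by
      rw [hFsucc]
      exact habove _ _ (hα _).1
  obtain ⟨f, hf⟩ := exists_eventually_coeff_eq (F := fun k => (F k).1) hα_tendsto
    fun k δ hδ => by
      rw [hFsucc]
      exact hagree _ δ hδ
  have hfA : f ∈ A := mem_closedAdjoin_of_eventually_coeff_eq (fun k => (F k).2.1) hf
  have hf1 : MvPowerSeries.coeff β f = 1 := by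
    obtain ⟨k, hk⟩ := (hf β).exists
    exact hk ▸ (F k).2.2.1
  have hsupp : ∀ γ ∈ supp K n f, ∀ᶠ k in atTop, γ ∈ supp K n (F k).1 := fun γ hγ =>
    (hf γ).mono fun k hk => mem_supp.2 (hk ▸ mem_supp.1 hγ)
  have hfβ : IsWLeast n w r (supp K n f) β := by
    refine ⟨by simp [supp, hf1], fun γ hγ hγβ => ?_⟩
    obtain ⟨k, hk⟩ := (hsupp γ hγ).exists
    exact (F k).2.2.2.2 γ hk hγβ
  obtain ⟨γ, hγ, hγA, hγβ⟩ := hbad f hfA hf1 hfβ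
  obtain ⟨k, hk, hkγ⟩ := ((hsupp γ hγ).and (hα_tendsto.eventually_gt_atTop (weight n w γ))).exists
  refine hkγ.not_ge ?_
  by_cases hγα : γ = α (F k)
  · exact hγα ▸ le_rfl
  · exact ((hα (F k)).2 γ ⟨⟨hk, hγA⟩, hγβ⟩ hγα).weight_le

end Reduction

section Convexity

variable {K n} {r : (Fin n →₀ ℕ) → (Fin n →₀ ℕ) → Prop} {a b v w : Fin n → ℝ} {θ : ℝ}

lemma convexComb_apply_pos (ha : ∀ i, 0 < a i) (hb : ∀ i, 0 < b i) (hθ : θ ∈ Set.Icc (0 : ℝ) 1)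
    (i : Fin n) :
    0 < (θ • a + (1 - θ) • b) i :=
  convex_Ioi (0 : ℝ) (ha i) (hb i) hθ.1 (sub_nonneg.2 hθ.2) (add_sub_cancel θ 1)

lemma WLt.convexComb (hθ : θ ∈ Set.Icc (0 : ℝ) 1) {β γ : Fin n →₀ ℕ} (ha : WLt n a r β γ)
    (hb : WLt n b r β γ) : WLt n (θ • a + (1 - θ) • b) r β γ := by
  have hda := sub_nonneg.2 ha.weight_le
  have hdb := sub_nonneg.2 hb.weight_le
  have h1θ := sub_nonneg.2 hθ.2
  rw [WLt, weight_convexComb, weight_convexComb]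
  refine (le_iff_lt_or_eq.1 ?_).imp id fun heq => ⟨heq, ?_⟩
  · nlinarith [mul_nonneg hθ.1 hda, mul_nonneg h1θ hdb]
  rcases hθ.1.eq_or_lt with rfl | hθ0
  · exact (hb.resolve_left (by linarith)).2
  · refine (ha.resolve_left fun h => ?_).2
    nlinarith [mul_pos hθ0 (sub_pos.2 h), mul_nonneg h1θ hdb]

variable [IsStrictTotalOrder (Fin n →₀ ℕ) r] {T : Set (MvPowerSeries (Fin n) K)}

lemma exponent_eq_of_expSet_subset {A : Set (MvPowerSeries (Fin n) K)}
    {f : MvPowerSeries (Fin n) K} {β : Fin n →₀ ℕ} (hv : ∀ i, 0 < v i) (hfA : f ∈ A) (hf : f ≠ 0)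
    (hred : ∀ γ ∈ supp K n f, γ ∈ expSet K n r w A → γ = β)
    (hvw : expSet K n r v A ⊆ expSet K n r w A) : exponent K n r v f = β :=
  hred _ (isWLeast_exponent hv hf).1 (hvw ⟨f, hfA, hf, rfl⟩)

lemma expSet_eq_of_subset (hv : ∀ i, 0 < v i) (hw : ∀ i, 0 < w i)
    (hvw : expSet K n r v (closedAdjoin K n T) ⊆ expSet K n r w (closedAdjoin K n T)) :
    expSet K n r v (closedAdjoin K n T) = expSet K n r w (closedAdjoin K n T) := by
  refine hvw.antisymm fun β hβ => ?_
  obtain ⟨f, hfA, hf1, -, hred⟩ := exists_reduced_of_mem_expSet hw hβ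
  have hf : f ≠ 0 := by rintro rfl; simp at hf1
  exact ⟨f, hfA, hf, exponent_eq_of_expSet_subset hv hfA hf hred hvw⟩

lemma expSet_subset_expSet_convexComb (ha : ∀ i, 0 < a i) (hb : ∀ i, 0 < b i)
    (hθ : θ ∈ Set.Icc (0 : ℝ) 1)
    (hba : expSet K n r b (closedAdjoin K n T) ⊆ expSet K n r a (closedAdjoin K n T)) :
    expSet K n r a (closedAdjoin K n T) ⊆
      expSet K n r (θ • a + (1 - θ) • b) (closedAdjoin K n T) := by
  intro β hβ
  obtain ⟨f, hfA, hf1, hfa, hred⟩ := exists_reduced_of_mem_expSet ha hβ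
  have hf : f ≠ 0 := by rintro rfl; simp at hf1
  have hfb : IsWLeast n b r (supp K n f) β :=
    exponent_eq_of_expSet_subset hb hfA hf hred hba ▸ isWLeast_exponent hb hf
  exact ⟨f, hfA, hf, exponent_eq_of_isWLeast
    ⟨hfa.1, fun γ hγ hγβ => (hfa.2 γ hγ hγβ).convexComb hθ (hfb.2 γ hγ hγβ)⟩⟩

lemma expSet_convexComb_eq (ha : ∀ i, 0 < a i) (hb : ∀ i, 0 < b i)
    (hab : expSet K n r a (closedAdjoin K n T) = expSet K n r b (closedAdjoin K n T))
    (hθ : θ ∈ Set.Icc (0 : ℝ) 1) :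
    expSet K n r (θ • a + (1 - θ) • b) (closedAdjoin K n T) =
      expSet K n r a (closedAdjoin K n T) := by
  have hsub := expSet_subset_expSet_convexComb ha hb hθ hab.superset
  exact (expSet_eq_of_subset ha (convexComb_apply_pos ha hb hθ) hsub).symm

lemma convex_setOf_expSet_eq (S : Set (Fin n →₀ ℕ)) :
    Convex ℝ {a : Fin n → ℝ | (∀ i, 0 < a i) ∧ expSet K n r a (closedAdjoin K n T) = S} := by
  rintro x ⟨hx, hxS⟩ y ⟨hy, hyS⟩ p q hp hq hpq
  obtain rfl : q = 1 - p := by linarith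
  have hpI : p ∈ Set.Icc (0 : ℝ) 1 := ⟨hp, by linarith⟩
  exact ⟨convexComb_apply_pos hx hy hpI,
    (expSet_convexComb_eq hx hy (hxS.trans hyS.symm) hpI).trans hxS⟩

end Convexity

theorem expSet_convex
    (r : (Fin n →₀ ℕ) → (Fin n →₀ ℕ) → Prop) (hr : IsWellOrder (Fin n →₀ ℕ) r)
    (s : ℕ) (f : Fin s → MvPowerSeries (Fin n) K)
    (A : Subalgebra K (MvPowerSeries (Fin n) K)) (hA : A = closedAdjoin K n (Set.range f)) :
    (∀ a b : Fin n → ℝ, (∀ i, 0 < a i) → (∀ i, 0 < b i) →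
      expSet K n r a (A : Set (MvPowerSeries (Fin n) K)) =
        expSet K n r b (A : Set (MvPowerSeries (Fin n) K)) →
      ∀ θ : ℝ, θ ∈ Set.Icc (0 : ℝ) 1 →
        expSet K n r (θ • a + (1 - θ) • b) (A : Set (MvPowerSeries (Fin n) K)) =
          expSet K n r a (A : Set (MvPowerSeries (Fin n) K))) ∧
    ∀ S : Set (Fin n →₀ ℕ),
      Convex ℝ {a : Fin n → ℝ | (∀ i, 0 < a i) ∧
        expSet K n r a (A : Set (MvPowerSeries (Fin n) K)) = S} := by
  subst hA
  exact ⟨fun a b ha hb hab θ hθ => expSet_convexComb_eq ha hb hab hθ, convex_setOf_expSet_eq⟩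

end CanonicalFan
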